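/- arXiv:2509.14584 — 3 statements merged into one kernel-verified Lean document; each statement's English description precedes it below -/
import Mathlib

section
/- Suppose f = (f₁,…,fₙ) ∈ Aut(𝔸ⁿ_k) admits a vector μ ∈ (ℝ_{>0})ⁿ with all entries strictly positive and a real number θ ≥ 1 such that deg_μ(fᵢ) ≤ θ·μᵢ for all i. Then λ(f) ≤ θ. -/
open MvPolynomial Filter

/-- Composition of polynomial endomorphisms of affine n-space: `(pcomp g f) = g ∘ f`. -/
noncomputable def pcomp {k : Type*} [CommSemiring k] {n : ℕ}
    (g f : Fin n → MvPolynomial (Fin n) k) : Fin n → MvPolynomial (Fin n) k :=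
  fun i => MvPolynomial.bind₁ f (g i)

/-- Iterates of a polynomial endomorphism. -/
noncomputable def piter {k : Type*} [CommSemiring k] {n : ℕ}
    (f : Fin n → MvPolynomial (Fin n) k) : ℕ → Fin n → MvPolynomial (Fin n) k
  | 0 => fun i => MvPolynomial.X i
  | r + 1 => pcomp f (piter f r)

/-- Degree of a polynomial endomorphism: max of total degrees of components. -/
noncomputable def pdeg {k : Type*} [CommSemiring k] {n : ℕ}
    (f : Fin n → MvPolynomial (Fin n) k) : ℕ :=
  Finset.univ.sup fun i => (f i).totalDegree

/-- `f` is a polynomial automorphism: it has a polynomial inverse. -/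
def IsAut {k : Type*} [CommSemiring k] {n : ℕ}
    (f : Fin n → MvPolynomial (Fin n) k) : Prop :=
  ∃ g : Fin n → MvPolynomial (Fin n) k,
    pcomp f g = (fun i => MvPolynomial.X i) ∧ pcomp g f = (fun i => MvPolynomial.X i)

/-- The sequence `r ↦ deg(f^r)^(1/r)` whose limit is the dynamical degree. -/
noncomputable def dynSeq {k : Type*} [CommSemiring k] {n : ℕ}
    (f : Fin n → MvPolynomial (Fin n) k) : ℕ → ℝ :=
  fun r => (pdeg (piter f r) : ℝ) ^ (1 / (r : ℝ))

/-- Weighted degree with weight vector `μ`. -/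
noncomputable def wdeg {k : Type*} [CommSemiring k] {n : ℕ}
    (μ : Fin n → NNReal) (p : MvPolynomial (Fin n) k) : NNReal :=
  p.support.sup fun a => ∑ i, (a i) • μ i

section aux
variable {k : Type*} [CommSemiring k] {n : ℕ} (μ : Fin n → NNReal)

/-- weight of an exponent vector -/
noncomputable def wt (a : Fin n →₀ ℕ) : NNReal := ∑ i, (a i) • μ i

lemma wt_add (a b : Fin n →₀ ℕ) : wt μ (a + b) = wt μ a + wt μ b := by
  simp [wt, add_smul, Finset.sum_add_distrib]

lemma wdeg_eq (p : MvPolynomial (Fin n) k) : wdeg μ p = p.support.sup (wt μ) := rfl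

lemma wt_le_wdeg {p : MvPolynomial (Fin n) k} {a} (ha : a ∈ p.support) :
    wt μ a ≤ wdeg μ p := Finset.le_sup ha

lemma wdeg_mul_le (p q : MvPolynomial (Fin n) k) :
    wdeg μ (p * q) ≤ wdeg μ p + wdeg μ q := by
  classical
  rw [wdeg_eq]
  apply Finset.sup_le
  intro a ha
  have h := MvPolynomial.support_mul p q ha
  rw [Finset.mem_add] at h
  obtain ⟨b, hb, c, hc, rfl⟩ := h
  rw [wt_add]
  exact add_le_add (wt_le_wdeg μ hb) (wt_le_wdeg μ hc)

lemma wdeg_one_le : wdeg μ (1 : MvPolynomial (Fin n) k) ≤ 0 := by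
  rw [wdeg_eq]
  apply Finset.sup_le
  intro a ha
  rw [MvPolynomial.mem_support_iff] at ha
  by_cases h : a = 0
  · subst h; simp [wt]
  · exfalso; apply ha; rw [MvPolynomial.coeff_one, if_neg (by simpa using (Ne.symm h))]
  
lemma wdeg_C_le (c : k) : wdeg μ (C c : MvPolynomial (Fin n) k) ≤ 0 := by
  rw [wdeg_eq]
  apply Finset.sup_le
  intro a ha
  rw [MvPolynomial.mem_support_iff] at ha
  by_cases h : a = 0
  · subst h; simp [wt]
  · exfalso; apply ha; rw [MvPolynomial.coeff_C, if_neg (by simpa using (Ne.symm h))]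

lemma wdeg_pow_le (p : MvPolynomial (Fin n) k) (e : ℕ) :
    wdeg μ (p ^ e) ≤ e • wdeg μ p := by
  induction e with
  | zero => simpa using wdeg_one_le μ
  | succ e ih =>
      rw [pow_succ, succ_nsmul]
      exact (wdeg_mul_le μ _ _).trans (add_le_add ih le_rfl)

lemma wdeg_sum_le {ι : Type*} (s : Finset ι) (g : ι → MvPolynomial (Fin n) k)
    {d : NNReal} (hd : ∀ j ∈ s, wdeg μ (g j) ≤ d) : wdeg μ (∑ j ∈ s, g j) ≤ d := by
  classical
  induction s using Finset.cons_induction with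
  | empty => simp [wdeg_eq]
  | cons a s has ih =>
      rw [Finset.sum_cons]
      rw [wdeg_eq]
      apply Finset.sup_le
      intro b hb
      have h := MvPolynomial.support_add hb
      rw [Finset.mem_union] at h
      rcases h with h | h
      · exact (wt_le_wdeg μ h).trans (hd a (Finset.mem_cons_self _ _))
      · exact (wt_le_wdeg μ h).trans (ih fun j hj => hd j (Finset.mem_cons_of_mem hj))

lemma wdeg_prod_le {ι : Type*} (s : Finset ι) (g : ι → MvPolynomial (Fin n) k) :
    wdeg μ (∏ j ∈ s, g j) ≤ ∑ j ∈ s, wdeg μ (g j) := by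
  classical
  induction s using Finset.cons_induction with
  | empty => simpa using wdeg_one_le μ
  | cons a s has ih =>
      rw [Finset.prod_cons, Finset.sum_cons]
      exact (wdeg_mul_le μ _ _).trans (add_le_add le_rfl ih)

lemma wdeg_bind₁_le (g : Fin n → MvPolynomial (Fin n) k) (p : MvPolynomial (Fin n) k)
    (c : NNReal) (hg : ∀ j, wdeg μ (g j) ≤ c * μ j) :
    wdeg μ (bind₁ g p) ≤ c * wdeg μ p := by
  classical
  conv_lhs => rw [p.as_sum, map_sum]
  apply wdeg_sum_le
  intro a ha
  rw [bind₁_monomial]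
  calc wdeg μ (C (coeff a p) * ∏ i ∈ a.support, g i ^ a i)
      ≤ wdeg μ (C (coeff a p) : MvPolynomial (Fin n) k)
        + wdeg μ (∏ i ∈ a.support, g i ^ a i) := wdeg_mul_le μ _ _
    _ ≤ 0 + ∑ i ∈ a.support, wdeg μ (g i ^ a i) :=
        add_le_add (wdeg_C_le μ _) (wdeg_prod_le μ _ _)
    _ = ∑ i ∈ a.support, wdeg μ (g i ^ a i) := by rw [zero_add]
    _ ≤ ∑ i ∈ a.support, a i • (c * μ i) := by
        apply Finset.sum_le_sum
        intro i _
        exact (wdeg_pow_le μ _ _).trans (nsmul_le_nsmul_right (hg i) _)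
    _ = c * ∑ i ∈ a.support, a i • μ i := by
        rw [Finset.mul_sum]
        congr 1; funext i
        rw [nsmul_eq_mul, nsmul_eq_mul, mul_left_comm]
    _ = c * wt μ a := by
        congr 1
        rw [wt]
        apply Finset.sum_subset (Finset.subset_univ _)
        intro i _ hi
        rw [Finsupp.notMem_support_iff] at hi
        simp [hi]
    _ ≤ c * wdeg μ p := mul_le_mul_right (wt_le_wdeg μ ha) c

lemma wdeg_X_le [Nontrivial k] (i : Fin n) : wdeg μ (X i : MvPolynomial (Fin n) k) ≤ μ i := by
  rw [wdeg_eq]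
  apply Finset.sup_le
  intro a ha
  rw [MvPolynomial.support_X, Finset.mem_singleton] at ha
  subst ha
  rw [wt]
  rw [Finset.sum_eq_single i]
  · simp
  · intro j _ hj; simp [Finsupp.single_apply, Ne.symm hj]
  · simp

lemma totalDegree_mul_min_le (m : NNReal) (hm : ∀ i, m ≤ μ i)
    (p : MvPolynomial (Fin n) k) :
    (p.totalDegree : NNReal) * m ≤ wdeg μ p := by
  rcases p.support.eq_empty_or_nonempty with he | hne
  · rw [MvPolynomial.totalDegree, he]; simp
  · obtain ⟨a, ha, hEq⟩ := Finset.exists_mem_eq_sup _ hne (fun s : Fin n →₀ ℕ => s.sum fun _ e => e)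
    rw [MvPolynomial.totalDegree, hEq]
    have h1 : (a.sum fun _ e => e) = ∑ i, a i := by
      rw [Finsupp.sum_fintype]; intro; rfl
    rw [h1]
    calc ((∑ i, a i : ℕ) : NNReal) * m = ∑ i, (a i : NNReal) * m := by
          push_cast; rw [Finset.sum_mul]
      _ ≤ ∑ i, (a i) • μ i := by
          apply Finset.sum_le_sum
          intro i _
          rw [nsmul_eq_mul]
          exact mul_le_mul_right (hm i) _
      _ ≤ wdeg μ p := wt_le_wdeg μ ha

lemma totalDegree_bind₁_le (g : Fin n → MvPolynomial (Fin n) k) (p : MvPolynomial (Fin n) k)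
    (d : ℕ) (hg : ∀ j, (g j).totalDegree ≤ d) :
    (bind₁ g p).totalDegree ≤ p.totalDegree * d := by
  classical
  conv_lhs => rw [p.as_sum, map_sum]
  apply MvPolynomial.totalDegree_finsetSum_le
  intro a ha
  rw [bind₁_monomial]
  calc (C (coeff a p) * ∏ i ∈ a.support, g i ^ a i).totalDegree
      ≤ (C (coeff a p) : MvPolynomial (Fin n) k).totalDegree
        + (∏ i ∈ a.support, g i ^ a i).totalDegree := totalDegree_mul _ _
    _ ≤ 0 + ∑ i ∈ a.support, (g i ^ a i).totalDegree := by
        rw [MvPolynomial.totalDegree_C]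
        exact add_le_add le_rfl (totalDegree_finset_prod _ _)
    _ ≤ ∑ i ∈ a.support, a i * d := by
        rw [zero_add]
        apply Finset.sum_le_sum
        intro i _
        exact (totalDegree_pow _ _).trans (Nat.mul_le_mul_left _ (hg i))
    _ = (∑ i ∈ a.support, a i) * d := by rw [Finset.sum_mul]
    _ ≤ p.totalDegree * d := by
        apply Nat.mul_le_mul_right
        exact le_of_eq_of_le (by rw [Finsupp.sum]) (MvPolynomial.le_totalDegree ha)

end aux


/-- if a strictly positive weight `μ` satisfies `deg_μ(fᵢ) ≤ θμᵢ`
with `θ ≥ 1`, then `λ(f) ≤ θ`. -/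
theorem dyndeg_le_of_pos_weight {k : Type*} [Field k] {n : ℕ}
    (f : Fin n → MvPolynomial (Fin n) k) (hf : IsAut f)
    (μ : Fin n → NNReal) (hμ : ∀ i, 0 < μ i) (θ : NNReal) (hθ : 1 ≤ θ)
    (h : ∀ i, wdeg μ (f i) ≤ θ * μ i) :
    ∃ L : ℝ, Tendsto (dynSeq f) atTop (nhds L) ∧ L ≤ (θ : ℝ) := by
  classical
  -- composition formula for iterates
  have hiter : ∀ r s : ℕ, ∀ i, piter f (r + s) i = bind₁ (piter f s) (piter f r i) := by
    intro r
    induction r with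
    | zero => intro s i; simp [piter]
    | succ r ih =>
        intro s i
        have hrs : r + 1 + s = (r + s) + 1 := by omega
        rw [hrs]
        show bind₁ (piter f (r + s)) (f i) = bind₁ (piter f s) (bind₁ (piter f r) (f i))
        rw [bind₁_bind₁]
        have hfun : piter f (r + s) = fun j => bind₁ (piter f s) (piter f r j) :=
          funext (ih s)
        rw [hfun]
  -- submultiplicativity of pdeg
  have hmul : ∀ r s : ℕ, pdeg (piter f (r + s)) ≤ pdeg (piter f r) * pdeg (piter f s) := by
    intro r s
    apply Finset.sup_le
    intro i _
    rw [hiter r s i]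
    refine (totalDegree_bind₁_le _ _ _ (fun j => Finset.le_sup (f := fun j => ((piter f s) j).totalDegree) (Finset.mem_univ j))).trans ?_
    exact Nat.mul_le_mul_right _ (Finset.le_sup (f := fun j => ((piter f r) j).totalDegree) (Finset.mem_univ i))
  have hθ0 : (0:ℝ) < (θ : ℝ) := lt_of_lt_of_le one_pos (by exact_mod_cast hθ)
  by_cases hz : ∃ r, 0 < r ∧ pdeg (piter f r) = 0
  · -- degenerate case: eventually zero
    obtain ⟨r0, hr0, h0⟩ := hz
    refine ⟨0, ?_, le_of_lt hθ0⟩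
    have hev : ∀ r, r0 ≤ r → dynSeq f r = 0 := by
      intro r hr
      obtain ⟨s, rfl⟩ := Nat.exists_eq_add_of_le hr
      have : pdeg (piter f (r0 + s)) = 0 :=
        Nat.le_zero.mp (le_of_le_of_eq (hmul r0 s) (by rw [h0, zero_mul]))
      rw [dynSeq, this]
      push_cast
      exact Real.zero_rpow (by
        have : (0:ℝ) < (r0 + s : ℕ) := by exact_mod_cast Nat.lt_of_lt_of_le hr0 hr
        positivity)
    apply Tendsto.congr' _ (tendsto_const_nhds (x := (0:ℝ)))
    filter_upwards [eventually_ge_atTop r0] with r hr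
    exact (hev r hr).symm
  · push_neg at hz
    have hpos1 : ∀ r, 0 < r → 1 ≤ pdeg (piter f r) := fun r hr =>
      Nat.one_le_iff_ne_zero.mpr (hz r hr)
    have hn : 0 < n := by
      by_contra hn
      have hn0 : n = 0 := by omega
      apply hz 1 one_pos
      subst hn0
      simp [pdeg]
    haveI : Nonempty (Fin n) := ⟨⟨0, hn⟩⟩
    have huniv : (Finset.univ : Finset (Fin n)).Nonempty := Finset.univ_nonempty
    have hpos : ∀ r, 1 ≤ pdeg (piter f r) := by
      intro r
      rcases Nat.eq_zero_or_pos r with rfl | hr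
      · have : ((X ⟨0, hn⟩ : MvPolynomial (Fin n) k)).totalDegree = 1 :=
          totalDegree_X _
        calc 1 = ((X ⟨0, hn⟩ : MvPolynomial (Fin n) k)).totalDegree := this.symm
          _ ≤ pdeg (piter f 0) := Finset.le_sup (f := fun i => ((piter f 0) i).totalDegree)
              (Finset.mem_univ (⟨0, hn⟩ : Fin n))
      · exact hpos1 r hr
    have hposR : ∀ r, (1:ℝ) ≤ (pdeg (piter f r) : ℝ) := fun r => by exact_mod_cast hpos r
    have hpos0 : ∀ r, (0:ℝ) < (pdeg (piter f r) : ℝ) := fun r =>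
      lt_of_lt_of_le one_pos (hposR r)
    -- subadditive sequence
    set u : ℕ → ℝ := fun r => Real.log (pdeg (piter f r)) with hu
    have hu0 : ∀ r, 0 ≤ u r := fun r => Real.log_nonneg (hposR r)
    have hsub : Subadditive u := by
      intro a b
      have h1 : (pdeg (piter f (a + b)) : ℝ) ≤ (pdeg (piter f a) : ℝ) * (pdeg (piter f b) : ℝ) := by
        exact_mod_cast hmul a b
      calc u (a + b) ≤ Real.log ((pdeg (piter f a) : ℝ) * (pdeg (piter f b) : ℝ)) :=
            Real.log_le_log (hpos0 _) h1
        _ = u a + u b := Real.log_mul (ne_of_gt (hpos0 a)) (ne_of_gt (hpos0 b))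
    have hbdd : BddBelow (Set.range fun r : ℕ => u r / r) := by
      refine ⟨0, ?_⟩
      rintro x ⟨r, rfl⟩
      have := hu0 r
      positivity
    have hlim := hsub.tendsto_lim hbdd
    refine ⟨Real.exp hsub.lim, ?_, ?_⟩
    · have hexp : Tendsto (fun r : ℕ => Real.exp (u r / r)) atTop (nhds (Real.exp hsub.lim)) :=
        (Real.continuous_exp.tendsto _).comp hlim
      apply Tendsto.congr' _ hexp
      filter_upwards [eventually_ge_atTop 1] with r hr
      rw [dynSeq, Real.rpow_def_of_pos (hpos0 r), mul_one_div, hu]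
    · -- upper bound
      set m : NNReal := Finset.univ.inf' huniv μ with hmdef
      have hm : ∀ i, m ≤ μ i := fun i => Finset.inf'_le _ (Finset.mem_univ i)
      have hmpos : 0 < m := by
        rw [hmdef, Finset.lt_inf'_iff]
        intro i _
        exact hμ i
      set M : NNReal := Finset.univ.sup' huniv μ with hMdef
      have hM : ∀ i, μ i ≤ M := fun i => Finset.le_sup' _ (Finset.mem_univ i)
      -- weighted degree bound on iterates
      have hwd : ∀ r i, wdeg μ (piter f r i) ≤ θ ^ r * μ i := by
        intro r
        induction r with
        | zero => intro i; simpa [piter] using wdeg_X_le μ i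
        | succ r ih =>
            intro i
            show wdeg μ (bind₁ (piter f r) (f i)) ≤ θ ^ (r + 1) * μ i
            calc wdeg μ (bind₁ (piter f r) (f i)) ≤ θ ^ r * wdeg μ (f i) :=
                  wdeg_bind₁_le μ _ _ _ ih
              _ ≤ θ ^ r * (θ * μ i) := mul_le_mul_right (h i) _
              _ = θ ^ (r + 1) * μ i := by rw [pow_succ]; ring
      -- degree bound: pdeg (piter f r) ≤ θ^r * M / m
      have hdeg : ∀ r, (pdeg (piter f r) : NNReal) ≤ θ ^ r * M / m := by
        intro r
        obtain ⟨i, _, hi⟩ := Finset.exists_mem_eq_sup Finset.univ huniv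
          (fun i => ((piter f r) i).totalDegree)
        rw [pdeg, hi]
        rw [le_div_iff₀ hmpos]
        calc ((piter f r i).totalDegree : NNReal) * m ≤ wdeg μ (piter f r i) :=
              totalDegree_mul_min_le μ m hm _
          _ ≤ θ ^ r * μ i := hwd r i
          _ ≤ θ ^ r * M := mul_le_mul_right (hM i) _
      set C : ℝ := max 1 ((M / m : NNReal) : ℝ) with hCdef
      have hC1 : (1:ℝ) ≤ C := le_max_left _ _
      have hC0 : (0:ℝ) < C := lt_of_lt_of_le one_pos hC1
      have hdegR : ∀ r, (pdeg (piter f r) : ℝ) ≤ (θ:ℝ) ^ r * C := by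
        intro r
        have h1 : (pdeg (piter f r) : ℝ) ≤ ((θ ^ r * M / m : NNReal) : ℝ) := by
          exact_mod_cast hdeg r
        refine h1.trans ?_
        have h2 : ((θ ^ r * M / m : NNReal) : ℝ) = (θ:ℝ) ^ r * ((M / m : NNReal) : ℝ) := by
          rw [mul_div_assoc]
          push_cast
          ring
        rw [h2]
        exact mul_le_mul_of_nonneg_left (le_max_right _ _) (by positivity)
      -- limit comparison
      have hcomp : ∀ᶠ r : ℕ in atTop, u r / r ≤ Real.log (θ:ℝ) + Real.log C / r := by
        filter_upwards [eventually_ge_atTop 1] with r hr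
        have hrpos : (0:ℝ) < (r:ℝ) := by exact_mod_cast hr
        have h1 : u r ≤ (r:ℝ) * Real.log (θ:ℝ) + Real.log C := by
          calc u r ≤ Real.log ((θ:ℝ) ^ r * C) := Real.log_le_log (hpos0 r) (hdegR r)
            _ = (r:ℝ) * Real.log (θ:ℝ) + Real.log C := by
                rw [Real.log_mul (by positivity) (ne_of_gt hC0), Real.log_pow]
        calc u r / r ≤ ((r:ℝ) * Real.log (θ:ℝ) + Real.log C) / r := by gcongr
          _ = Real.log (θ:ℝ) + Real.log C / r := by
              rw [add_div, mul_div_cancel_left₀ _ (ne_of_gt hrpos)]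
      have hrhs : Tendsto (fun r : ℕ => Real.log (θ:ℝ) + Real.log C / r) atTop
          (nhds (Real.log (θ:ℝ) + 0)) :=
        tendsto_const_nhds.add (tendsto_const_div_atTop_nhds_zero_nat _)
      have hle : hsub.lim ≤ Real.log (θ:ℝ) + 0 :=
        le_of_tendsto_of_tendsto hlim hrhs hcomp
      rw [add_zero] at hle
      calc Real.exp hsub.lim ≤ Real.exp (Real.log (θ:ℝ)) := Real.exp_le_exp.mpr hle
        _ = (θ:ℝ) := Real.exp_log hθ0
end

section
/- The quadratic homogeneous automorphism S₁ = (x₁, x₂ + o₁x₁², x₃ − x₁x₄ + τ₂(x₁,x₂), x₄ + x₁x₅ + x₂x₃ + τ₃(x₁,x₂), x₅ + x₂x₄ + τ₄(x₁,x₂)) of 𝔸⁵_ℂ, where o₁ ∈ ℂ and τ₂,τ₃,τ₄ are quadratic homogeneous polynomials in x₁,x₂, has dynamical degree λ(S₁) = 1. -/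
open MvPolynomial Filter

private lemma totalDegree_bind₁_le' {k : Type*} [CommSemiring k] {n : ℕ}
    (F : Fin n → MvPolynomial (Fin n) k) (p : MvPolynomial (Fin n) k) (N : ℕ)
    (h : ∀ a ∈ p.support, (∑ i ∈ a.support, a i * (F i).totalDegree) ≤ N) :
    (MvPolynomial.bind₁ F p).totalDegree ≤ N := by
  conv_lhs => rw [p.as_sum]
  rw [map_sum]
  refine MvPolynomial.totalDegree_finsetSum_le fun a ha => ?_
  rw [bind₁, aeval_monomial, algebraMap_eq]
  calc (C (coeff a p) * a.prod fun i k => F i ^ k).totalDegree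
      ≤ (C (coeff a p)).totalDegree + (∏ i ∈ a.support, F i ^ a i).totalDegree :=
        totalDegree_mul _ _
    _ ≤ 0 + ∑ i ∈ a.support, (F i ^ a i).totalDegree :=
        add_le_add (le_of_eq (totalDegree_C _)) (totalDegree_finset_prod _ _)
    _ ≤ ∑ i ∈ a.support, a i * (F i).totalDegree := by
        rw [zero_add]; exact Finset.sum_le_sum fun i _ => totalDegree_pow _ _
    _ ≤ N := h a ha

private lemma tau_bind_bound (τ : MvPolynomial (Fin 5) ℂ) (hh : τ.IsHomogeneous 2)
    (hv : ∀ a ∈ τ.support, ∀ j : Fin 5, 2 ≤ j.val → a j = 0)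
    (F : Fin 5 → MvPolynomial (Fin 5) ℂ)
    (h0 : (F 0).totalDegree ≤ 2) (h1 : (F 1).totalDegree ≤ 2) :
    (MvPolynomial.bind₁ F τ).totalDegree ≤ 4 := by
  refine totalDegree_bind₁_le' F τ 4 fun a ha => ?_
  have hdeg : a.degree = 2 := by
    rw [Finsupp.degree_eq_weight_one]
    exact hh (MvPolynomial.mem_support_iff.mp ha)
  have hsum : ∑ i ∈ a.support, a i = 2 := hdeg
  calc ∑ i ∈ a.support, a i * (F i).totalDegree
      ≤ ∑ i ∈ a.support, a i * 2 := by
        refine Finset.sum_le_sum fun i hi => ?_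
        have hne : a i ≠ 0 := Finsupp.mem_support_iff.mp hi
        have hlt : i.val < 2 := by
          by_contra hc
          exact hne (hv a ha i (by omega))
        have hor : i = 0 ∨ i = 1 := by
          rcases (by omega : i.val = 0 ∨ i.val = 1) with h | h
          · exact Or.inl (Fin.ext h)
          · exact Or.inr (Fin.ext h)
        rcases hor with h | h <;> subst h <;> exact Nat.mul_le_mul_left _ (by assumption)
    _ = 4 := by rw [← Finset.sum_mul, hsum]; norm_num

/-- the quadratic homogeneous automorphism `S₁` of `𝔸⁵_ℂ`
has dynamical degree `λ(S₁) = 1`. -/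
theorem dyndeg_S1_eq_one (o₁ : ℂ) (τ₂ τ₃ τ₄ : MvPolynomial (Fin 5) ℂ)
    (hτ₂h : τ₂.IsHomogeneous 2) (hτ₃h : τ₃.IsHomogeneous 2) (hτ₄h : τ₄.IsHomogeneous 2)
    (hτ₂v : ∀ a ∈ τ₂.support, ∀ j : Fin 5, 2 ≤ j.val → a j = 0)
    (hτ₃v : ∀ a ∈ τ₃.support, ∀ j : Fin 5, 2 ≤ j.val → a j = 0)
    (hτ₄v : ∀ a ∈ τ₄.support, ∀ j : Fin 5, 2 ≤ j.val → a j = 0) :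
    Tendsto (dynSeq
      ![MvPolynomial.X 0,
        MvPolynomial.X 1 + MvPolynomial.C o₁ * MvPolynomial.X 0 ^ 2,
        MvPolynomial.X 2 - MvPolynomial.X 0 * MvPolynomial.X 3 + τ₂,
        MvPolynomial.X 3 + MvPolynomial.X 0 * MvPolynomial.X 4
          + MvPolynomial.X 1 * MvPolynomial.X 2 + τ₃,
        MvPolynomial.X 4 + MvPolynomial.X 1 * MvPolynomial.X 3 + τ₄])
      atTop (nhds 1) := by
  set f : Fin 5 → MvPolynomial (Fin 5) ℂ :=
    ![MvPolynomial.X 0,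
      MvPolynomial.X 1 + MvPolynomial.C o₁ * MvPolynomial.X 0 ^ 2,
      MvPolynomial.X 2 - MvPolynomial.X 0 * MvPolynomial.X 3 + τ₂,
      MvPolynomial.X 3 + MvPolynomial.X 0 * MvPolynomial.X 4
        + MvPolynomial.X 1 * MvPolynomial.X 2 + τ₃,
      MvPolynomial.X 4 + MvPolynomial.X 1 * MvPolynomial.X 3 + τ₄] with hf
  -- Main degree estimate by induction on the iterate
  have key : ∀ r : ℕ, piter f r 0 = X 0 ∧ (piter f r 1).totalDegree ≤ 2 ∧
      ∀ i, (piter f r i).totalDegree ≤ 2 * r + 2 := by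
    intro r
    induction r with
    | zero =>
      refine ⟨rfl, ?_, fun i => ?_⟩
      · show (X 1 : MvPolynomial (Fin 5) ℂ).totalDegree ≤ 2
        rw [totalDegree_X]; norm_num
      · show (X i : MvPolynomial (Fin 5) ℂ).totalDegree ≤ 2 * 0 + 2
        rw [totalDegree_X]; norm_num
    | succ r ih =>
      obtain ⟨ih0, ih1, ihall⟩ := ih
      set F := piter f r with hF
      have hd0 : (F 0).totalDegree = 1 := by rw [ih0, totalDegree_X]
      have hd0' : (F 0).totalDegree ≤ 2 := by omega
      -- component 0 of the next iterate
      have e0 : piter f (r + 1) 0 = X 0 := by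
        show MvPolynomial.bind₁ F (f 0) = X 0
        rw [show f 0 = X 0 from rfl, bind₁_X_right, ih0]
      -- component 1 degree
      have e1d : (piter f (r + 1) 1).totalDegree ≤ 2 := by
        show (MvPolynomial.bind₁ F (f 1)).totalDegree ≤ 2
        rw [show f 1 = X 1 + C o₁ * X 0 ^ 2 from rfl]
        simp only [map_add, map_mul, map_pow, bind₁_X_right, bind₁_C_right]
        refine (totalDegree_add _ _).trans (max_le ih1 ?_)
        refine (totalDegree_mul _ _).trans ?_
        rw [totalDegree_C, zero_add]
        exact (totalDegree_pow _ _).trans (by omega)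

      refine ⟨e0, e1d, fun i => ?_⟩
      fin_cases i
      · rw [show piter f (r + 1) ⟨0, by omega⟩ = piter f (r + 1) 0 from rfl, e0,
          totalDegree_X]
        omega
      · exact le_trans e1d (by omega)
      · show (MvPolynomial.bind₁ F (f 2)).totalDegree ≤ 2 * (r + 1) + 2
        rw [show f 2 = X 2 - X 0 * X 3 + τ₂ from rfl]
        rw [map_add, map_sub, map_mul, bind₁_X_right, bind₁_X_right, bind₁_X_right]
        refine (totalDegree_add _ _).trans (max_le ((totalDegree_sub _ _).trans
          (max_le ?_ ?_)) ?_)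
        · exact (ihall 2).trans (by omega)
        · refine (totalDegree_mul _ _).trans ?_
          have := ihall 3
          omega
        · exact (tau_bind_bound τ₂ hτ₂h hτ₂v F hd0' ih1).trans (by omega)
      · show (MvPolynomial.bind₁ F (f 3)).totalDegree ≤ 2 * (r + 1) + 2
        rw [show f 3 = X 3 + X 0 * X 4 + X 1 * X 2 + τ₃ from rfl]
        rw [map_add, map_add, map_add, map_mul, map_mul, bind₁_X_right, bind₁_X_right,
          bind₁_X_right, bind₁_X_right, bind₁_X_right]
        refine (totalDegree_add _ _).trans (max_le ((totalDegree_add _ _).trans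
          (max_le ((totalDegree_add _ _).trans (max_le ?_ ?_)) ?_)) ?_)
        · exact (ihall 3).trans (by omega)
        · refine (totalDegree_mul _ _).trans ?_
          have := ihall 4
          omega
        · refine (totalDegree_mul _ _).trans ?_
          have := ihall 2
          omega
        · exact (tau_bind_bound τ₃ hτ₃h hτ₃v F hd0' ih1).trans (by omega)
      · show (MvPolynomial.bind₁ F (f 4)).totalDegree ≤ 2 * (r + 1) + 2
        rw [show f 4 = X 4 + X 1 * X 3 + τ₄ from rfl]
        rw [map_add, map_add, map_mul, bind₁_X_right, bind₁_X_right, bind₁_X_right]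
        refine (totalDegree_add _ _).trans (max_le ((totalDegree_add _ _).trans
          (max_le ?_ ?_)) ?_)
        · exact (ihall 4).trans (by omega)
        · refine (totalDegree_mul _ _).trans ?_
          have := ihall 3
          omega
        · exact (tau_bind_bound τ₄ hτ₄h hτ₄v F hd0' ih1).trans (by omega)
  -- bounds for pdeg
  have hpd_low : ∀ r : ℕ, 1 ≤ pdeg (piter f r) := by
    intro r
    have h1 : (piter f r 0).totalDegree = 1 := by rw [(key r).1, totalDegree_X]
    calc 1 = (piter f r 0).totalDegree := h1.symm
      _ ≤ pdeg (piter f r) :=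
          Finset.le_sup (f := fun i : Fin 5 => (piter f r i).totalDegree) (Finset.mem_univ 0)
  have hpd_up : ∀ r : ℕ, pdeg (piter f r) ≤ 2 * r + 2 :=
    fun r => Finset.sup_le fun i _ => (key r).2.2 i
  -- lower bound for dynSeq
  have hlow : ∀ r : ℕ, (1 : ℝ) ≤ dynSeq f r := by
    intro r
    have h1 : (1 : ℝ) ≤ (pdeg (piter f r) : ℝ) := by exact_mod_cast hpd_low r
    have h2 : (0 : ℝ) ≤ 1 / (r : ℝ) := by positivity
    calc (1 : ℝ) = (1 : ℝ) ^ (1 / (r : ℝ)) := (Real.one_rpow _).symm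
      _ ≤ (pdeg (piter f r) : ℝ) ^ (1 / (r : ℝ)) :=
          Real.rpow_le_rpow (by norm_num) h1 h2
  -- upper bound for dynSeq, eventually
  have hup : ∀ r : ℕ, 3 ≤ r → dynSeq f r ≤ ((r : ℝ) ^ ((1 : ℝ) / r)) ^ 2 := by
    intro r hr
    have hrpos : (0 : ℝ) < (r : ℝ) := by exact_mod_cast Nat.lt_of_lt_of_le (by norm_num) hr
    have hb : (pdeg (piter f r) : ℝ) ≤ (r : ℝ) ^ (2 : ℕ) := by
      have h2 : (2 * r + 2 : ℕ) ≤ r ^ 2 := by nlinarith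
      exact_mod_cast le_trans (hpd_up r) h2
    have hstep : dynSeq f r ≤ ((r : ℝ) ^ (2 : ℕ)) ^ ((1 : ℝ) / r) :=
      Real.rpow_le_rpow (by positivity) hb (by positivity)
    refine hstep.trans_eq ?_
    rw [← Real.rpow_natCast (r : ℝ) 2, ← Real.rpow_natCast ((r : ℝ) ^ ((1 : ℝ) / r)) 2,
      ← Real.rpow_mul hrpos.le, ← Real.rpow_mul hrpos.le]
    ring_nf
  -- limit of the upper bound
  have hg : Tendsto (fun r : ℕ => ((r : ℝ) ^ ((1 : ℝ) / r)) ^ 2) atTop (nhds 1) := by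
    have h := tendsto_rpow_div.comp tendsto_natCast_atTop_atTop
    have h2 := h.pow 2
    simpa using h2
  refine tendsto_of_tendsto_of_tendsto_of_le_of_le' tendsto_const_nhds hg
    (Eventually.of_forall hlow) ?_
  filter_upwards [eventually_ge_atTop 3] with r hr using hup r hr
end

section
/- Let f = (f₁,…,fₙ) be a permutation-triangular automorphism of 𝔸ⁿ_k associated to the permutation ω, so fᵢ = c_{ω(i)}x_{ω(i)} + p_{ω(i)}(x₁,…,x_{ω(i)−1}). If ω(i) ≠ i and ω(i) > ω(1), …, ω(i−1), then f is conjugate (by the triangular automorphism g = (x₁,…,xᵢ − cᵢ^{-1}pᵢ(x₁,…,x_{i−1}),…,xₙ)) to a permutation-triangular automorphism with the same permutation ω in which the polynomial p_i is replaced by 0. -/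
open MvPolynomial Filter

lemma bind₁_eq_self {k : Type*} [CommSemiring k] {n : ℕ}
    (g : Fin n → MvPolynomial (Fin n) k) (q : MvPolynomial (Fin n) k)
    (h : ∀ j ∈ q.vars, g j = X j) : bind₁ g q = q := by
  have := hom_congr_vars (f₁ := (bind₁ g).toRingHom)
    (f₂ := (bind₁ (X : Fin n → MvPolynomial (Fin n) k)).toRingHom) (p₁ := q) (p₂ := q)
    ?_ ?_ rfl
  · simpa using this
  · ext a; simp [algebraMap_eq]
  · intro j hj _; simp [h j hj]

lemma supp_to_vars {k : Type*} [CommSemiring k] {n : ℕ} {q : MvPolynomial (Fin n) k} {l : Fin n}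
    (h : ∀ a ∈ q.support, ∀ j : Fin n, l ≤ j → a j = 0) : ∀ j ∈ q.vars, j < l := by
  intro j hj
  rw [mem_vars] at hj
  obtain ⟨a, ha, hja⟩ := hj
  by_contra hlt
  push_neg at hlt
  exact (Finsupp.mem_support_iff.mp hja) (h a ha j hlt)

lemma vars_to_supp {k : Type*} [CommSemiring k] {n : ℕ} {q : MvPolynomial (Fin n) k} {l : Fin n}
    (h : ∀ j ∈ q.vars, j < l) : ∀ a ∈ q.support, ∀ j : Fin n, l ≤ j → a j = 0 := by
  intro a ha j hlj
  by_contra haj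
  exact absurd (h j ((mem_vars j).mpr ⟨a, ha, Finsupp.mem_support_iff.mpr haj⟩)) (not_lt.mpr hlj)

lemma bind_vars_lt {k : Type*} [CommSemiring k] {n : ℕ}
    {g : Fin n → MvPolynomial (Fin n) k} {β : Fin n → Fin n}
    (hg : ∀ j : Fin n, ∀ t ∈ (g j).vars, t ≤ β j)
    {q : MvPolynomial (Fin n) k} {m : Fin n} (hq : ∀ j ∈ q.vars, β j < m) :
    ∀ t ∈ (bind₁ g q).vars, t < m := by
  intro t ht
  obtain ⟨j, hj, htj⟩ := mem_vars_bind₁ g q ht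
  exact lt_of_le_of_lt (hg j t htj) (hq j hj)


set_option maxHeartbeats 1000000 in
/-- elimination of `pᵢ` in a permutation-triangular automorphism by
conjugation with `g = (x₁,…,xᵢ − cᵢ⁻¹pᵢ,…,xₙ)`, when `ω(i) ≠ i` and
`ω(i) > ω(1),…,ω(i−1)`. -/
theorem eliminate_pi_by_conjugation {k : Type*} [Field k] {n : ℕ}
    (ω : Equiv.Perm (Fin n)) (c : Fin n → k) (p : Fin n → MvPolynomial (Fin n) k)
    (hc : ∀ i, c i ≠ 0)
    (hp : ∀ i : Fin n, ∀ a ∈ (p i).support, ∀ j : Fin n, i ≤ j → a j = 0)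
    (f : Fin n → MvPolynomial (Fin n) k)
    (hf : f = fun i => MvPolynomial.C (c (ω i)) * MvPolynomial.X (ω i) + p (ω i))
    (i : Fin n) (hωi : ω i ≠ i) (hmax : ∀ j : Fin n, j < i → ω j < ω i) :
    ∃ p' : Fin n → MvPolynomial (Fin n) k,
      (∀ l : Fin n, ∀ a ∈ (p' l).support, ∀ j : Fin n, l ≤ j → a j = 0) ∧
      p' i = 0 ∧
      pcomp (pcomp
          (fun j => if j = i then
              MvPolynomial.X i + MvPolynomial.C (c i)⁻¹ * p i else MvPolynomial.X j) f)
        (fun j => if j = i then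
            MvPolynomial.X i - MvPolynomial.C (c i)⁻¹ * p i else MvPolynomial.X j)
        = fun j => MvPolynomial.C (c (ω j)) * MvPolynomial.X (ω j) + p' (ω j) := by
  classical
  set g : Fin n → MvPolynomial (Fin n) k :=
    fun j => if j = i then X i - C (c i)⁻¹ * p i else X j with hg
  set ginv : Fin n → MvPolynomial (Fin n) k :=
    fun j => if j = i then X i + C (c i)⁻¹ * p i else X j with hginv
  -- vars of p l are < l
  have hpv : ∀ l : Fin n, ∀ j ∈ (p l).vars, j < l := fun l => supp_to_vars (hp l)
  -- i < ω i by pigeonhole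
  have hii : i < ω i := by
    rcases lt_trichotomy (ω i) i with h | h | h
    · exfalso
      have hmaps : ∀ j ∈ Finset.Iic i, ω j ∈ Finset.Iic (ω i) := by
        intro j hj
        rcases lt_or_eq_of_le (Finset.mem_Iic.mp hj) with hj' | hj'
        · exact Finset.mem_Iic.mpr (hmax j hj').le
        · subst hj'; exact Finset.mem_Iic.mpr le_rfl
      have := Finset.card_le_card_of_injOn ω hmaps (fun a _ b _ hab => ω.injective hab)
      rw [Fin.card_Iic, Fin.card_Iic] at this
      omega
    · exact absurd h hωi
    · exact h
  -- vars bounds for g, ginv, f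
  have hgiv : ∀ t ∈ (X i - C (c i)⁻¹ * p i : MvPolynomial (Fin n) k).vars, t ≤ i := by
    intro t ht
    have := vars_sub_subset (p := X i) (q := C (c i)⁻¹ * p i) ht
    rcases Finset.mem_union.mp this with h | h
    · rw [vars_X] at h; exact le_of_eq (Finset.mem_singleton.mp h)
    · have := vars_mul _ _ h
      rcases Finset.mem_union.mp this with h' | h'
      · simp [vars_C] at h'
      · exact (hpv i t h').le
  have hginviv : ∀ t ∈ (X i + C (c i)⁻¹ * p i : MvPolynomial (Fin n) k).vars, t ≤ i := by
    intro t ht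
    have := vars_add_subset _ _ ht
    rcases Finset.mem_union.mp this with h | h
    · rw [vars_X] at h; exact le_of_eq (Finset.mem_singleton.mp h)
    · have := vars_mul _ _ h
      rcases Finset.mem_union.mp this with h' | h'
      · simp [vars_C] at h'
      · exact (hpv i t h').le
  have hgv : ∀ j : Fin n, ∀ t ∈ (g j).vars, t ≤ j := by
    intro j t ht
    by_cases hj : j = i
    · subst hj; simp only [hg, if_pos rfl] at ht; exact hgiv t ht
    · simp only [hg, if_neg hj, vars_X] at ht
      exact le_of_eq (Finset.mem_singleton.mp ht)
  have hfv : ∀ j : Fin n, ∀ t ∈ (f j).vars, t ≤ ω j := by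
    intro j t ht
    rw [hf] at ht
    have := vars_add_subset _ _ ht
    rcases Finset.mem_union.mp this with h | h
    · have := vars_mul _ _ h
      rcases Finset.mem_union.mp this with h' | h'
      · simp [vars_C] at h'
      · rw [vars_X] at h'; exact le_of_eq (Finset.mem_singleton.mp h')
    · exact (hpv (ω j) t h).le
  -- bind₁ g fixes p l for l ≤ i
  have hg_fix : ∀ l : Fin n, l ≤ i → bind₁ g (p l) = p l := by
    intro l hl
    apply bind₁_eq_self
    intro j hj
    have : j < i := lt_of_lt_of_le (hpv l j hj) hl
    simp [hg, Fin.ne_of_lt this]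
  -- definition of p'
  set A : MvPolynomial (Fin n) k :=
    bind₁ g (p (ω i)) + C (c i)⁻¹ * bind₁ g (bind₁ f (p i)) with hA
  set p' : Fin n → MvPolynomial (Fin n) k :=
    fun l => if l = i then 0 else if l = ω i then A else bind₁ g (p l) with hp'
  have hp'i : p' i = 0 := by simp [hp']
  -- vars bounds for p'
  have hAv : ∀ t ∈ A.vars, t < ω i := by
    intro t ht
    have h1 : ∀ t ∈ (bind₁ g (p (ω i))).vars, t < ω i :=
      bind_vars_lt (β := id) hgv (fun j hj => hpv (ω i) j hj)
    have h2 : ∀ t ∈ (bind₁ f (p i)).vars, t < ω i :=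
      bind_vars_lt hfv (fun j hj => hmax j (hpv i j hj))
    have h3 : ∀ t ∈ (bind₁ g (bind₁ f (p i))).vars, t < ω i :=
      bind_vars_lt (β := id) hgv h2
    have := vars_add_subset _ _ ht
    rcases Finset.mem_union.mp this with h | h
    · exact h1 t h
    · have := vars_mul _ _ h
      rcases Finset.mem_union.mp this with h' | h'
      · simp [vars_C] at h'
      · exact h3 t h'
  have hp'v : ∀ l : Fin n, ∀ j ∈ (p' l).vars, j < l := by
    intro l
    by_cases hl : l = i
    · subst hl
      intro j hj
      rw [hp'i] at hj
      simp at hj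
    · by_cases hl' : l = ω i
      · subst hl'; simpa [hp', hl] using hAv
      · simp only [hp', if_neg hl, if_neg hl']
        exact bind_vars_lt (β := id) hgv (fun j hj => hpv l j hj)
  refine ⟨p', fun l => vars_to_supp (hp'v l), hp'i, ?_⟩
  -- the main identity
  have key : ∀ j : Fin n, bind₁ g (bind₁ f (ginv j)) = C (c (ω j)) * X (ω j) + p' (ω j) := by
    intro j
    by_cases hj : j = i
    · subst hj
      have : ginv j = X j + C (c j)⁻¹ * p j := by simp [hginv]
      rw [this]
      rw [map_add, map_mul, bind₁_X_right, bind₁_C_right, map_add, map_mul, bind₁_C_right]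
      have hfj : bind₁ g (f j) = C (c (ω j)) * X (ω j) + bind₁ g (p (ω j)) := by
        rw [hf]
        simp only
        rw [map_add, map_mul, bind₁_C_right, bind₁_X_right]
        have : g (ω j) = X (ω j) := by simp [hg, hωi]
        rw [this]
      rw [hfj]
      have hne : ω j ≠ j := hωi
      simp only [hp', if_neg hne, if_pos rfl, hA, if_true]
      ring
    · have hginvj : ginv j = X j := by simp [hginv, hj]
      rw [hginvj, bind₁_X_right]
      by_cases hωj : ω j = i
      · rw [hf]
        simp only
        rw [map_add, map_mul, bind₁_C_right, bind₁_X_right, hωj]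
        have hgi : g i = X i - C (c i)⁻¹ * p i := by simp [hg]
        rw [hgi, hg_fix i le_rfl]
        have hcc : (C (c i) : MvPolynomial (Fin n) k) * C (c i)⁻¹ = 1 := by
          rw [← C_mul, mul_inv_cancel₀ (hc i), C_1]
        rw [hp'i]
        have hcp : C (c i) * (C (c i)⁻¹ * p i) = p i := by
          rw [← mul_assoc, hcc, one_mul]
        rw [mul_sub, hcp]
        ring
      · rw [hf]
        simp only
        rw [map_add, map_mul, bind₁_C_right, bind₁_X_right]
        have hg' : g (ω j) = X (ω j) := by simp [hg, hωj]
        have hne2 : ω j ≠ ω i := fun h => hj (ω.injective h)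
        rw [hg']
        simp only [hp', if_neg hωj, if_neg hne2]
  funext j
  simp only [pcomp]
  exact key j
end
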